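/- Let C_n be the cycle graph on [n] and let S ∈ min(C_n) with |S| ≥ 3, whose complement decomposes into intervals I_1,...,I_k (k = |S|) with I_j = [a_j, b_j] and a_{j+1} = b_j + 2 cyclically. Let A be a collection of subsets of [n] of size 1 or 2, each disjoint from the dependent sets of M(S) (i.e., each element of A is either a singleton {x} with x ∉ S, or a pair {u,v} with u,v in different intervals and u,v ∉ S). Then A is a transversal of the collection {D(M(S'))\D(M(S)) : S' ∈ min(C_n)\{S}} if and only if: (i) the union of the elements of A equals [n]\S, and (ii) for each j ∈ [k] there exist u ∈ I_j and w ∈ I_{j+1} with {u,w} ∈ A. -/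

import Mathlib

open MvPolynomial

variable {n : ℕ}

/-- Number of connected components of the subgraph of `G` induced on `T`. -/
noncomputable def numComp (G : SimpleGraph (Fin n)) (T : Set (Fin n)) : ℕ :=
  Nat.card (G.induce T).ConnectedComponent

/-- `a` and `b` lie in the same connected component of the subgraph induced on `T`. -/
def SameComp (G : SimpleGraph (Fin n)) (T : Set (Fin n)) (a b : Fin n) : Prop :=
  ∃ (ha : a ∈ T) (hb : b ∈ T), (G.induce T).Reachable ⟨a, ha⟩ ⟨b, hb⟩

/-- `S` is a minimal `k`-cut of `G`. -/
def IsMinKCut (G : SimpleGraph (Fin n)) (S : Set (Fin n)) (k : ℕ) : Prop :=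
  S.Nonempty ∧ S ≠ Set.univ ∧ numComp G Sᶜ = k ∧
    ∀ i ∈ S, numComp G (Sᶜ ∪ {i}) < numComp G Sᶜ

/-- The collection `min(G)`: all minimal `k`-cuts (`k ≥ 2`) together with `∅`. -/
def minSet (G : SimpleGraph (Fin n)) : Set (Set (Fin n)) :=
  {S | S = ∅ ∨ ∃ k, 2 ≤ k ∧ IsMinKCut G S k}

/-- `A` is a connected dominating set of the subgraph of `G` induced on `T`. -/
def ConnDom (G : SimpleGraph (Fin n)) (T A : Set (Fin n)) : Prop :=
  A ⊆ T ∧ (G.induce A).Connected ∧ ∀ v ∈ T, v ∉ A → ∃ a ∈ A, G.Adj v a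

/-- The polynomial ring `K[x_1,…,x_n,y_1,…,y_n]` over `ℂ`. -/
abbrev PolyRing (n : ℕ) := MvPolynomial (Fin n ⊕ Fin n) ℂ

/-- The binomial `f_{i,j} = x_i y_j − x_j y_i`. -/
noncomputable def fij (i j : Fin n) : PolyRing n :=
  X (Sum.inl i) * X (Sum.inr j) - X (Sum.inl j) * X (Sum.inr i)

/-- The binomial edge ideal of a graph. -/
noncomputable def beIdeal (G : SimpleGraph (Fin n)) : Ideal (PolyRing n) :=
  Ideal.span {g | ∃ i j, G.Adj i j ∧ g = fij i j}

/-- Localized v-number of `I` at `p`. -/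
noncomputable def vAt (I p : Ideal (PolyRing n)) : ℕ :=
  sInf {d | ∃ f : PolyRing n, f.IsHomogeneous d ∧ Submodule.colon I (Ideal.span {f}) = p}

/-- v-number of `I`. -/
noncomputable def vNum (I : Ideal (PolyRing n)) : ℕ :=
  sInf {d | ∃ f : PolyRing n, f.IsHomogeneous d ∧ (Submodule.colon I (Ideal.span {f})).IsPrime}

/-- The graph which is the disjoint union of complete graphs on the connected
components of the subgraph of `G` induced on `Sᶜ`. -/
def tildeG (G : SimpleGraph (Fin n)) (S : Set (Fin n)) : SimpleGraph (Fin n) :=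
  SimpleGraph.fromRel (fun a b => SameComp G Sᶜ a b)

/-- The minimal prime `P_S` of the binomial edge ideal. -/
noncomputable def primePS (G : SimpleGraph (Fin n)) (S : Set (Fin n)) : Ideal (PolyRing n) :=
  Ideal.span (({g | ∃ i ∈ S, g = X (Sum.inl i)} ∪ {g | ∃ i ∈ S, g = X (Sum.inr i)} : Set (PolyRing n)))
    ⊔ beIdeal (tildeG G S)

/-- `B` is a dependent set of the rank-≤2 matroid `M(S)`. -/
def depM (G : SimpleGraph (Fin n)) (S : Set (Fin n)) (B : Set (Fin n)) : Prop :=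
  (B ∩ S).Nonempty ∨ (∃ a b, a ∈ B ∧ b ∈ B ∧ a ≠ b ∧ SameComp G Sᶜ a b) ∨ 3 ≤ B.ncard

/-- `A` is a transversal of `{D(M(S'))\D(M(S)) : S' ∈ min(G)\{S}}` consisting of
singletons and pairs outside `D(M(S))`. -/
def IsTransversal (G : SimpleGraph (Fin n)) (S : Set (Fin n))
    (A : Finset (Finset (Fin n))) : Prop :=
  (∀ e ∈ A, e.card = 1 ∨ e.card = 2) ∧ (∀ e ∈ A, ¬ depM G S ↑e) ∧
    ∀ S' ∈ minSet G, S' ≠ S → ∃ e ∈ A, depM G S' ↑e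

/-- The singletons of `A`, viewed as a subset of `[n]`. -/
def A1set (A : Finset (Finset (Fin n))) : Finset (Fin n) :=
  (A.filter fun e => e.card = 1).biUnion id

/-- The pairs of `A`. -/
def A2set (A : Finset (Finset (Fin n))) : Finset (Finset (Fin n)) :=
  A.filter fun e => e.card = 2

/-- The binomial attached to an unordered pair. -/
noncomputable def fPair (e : Finset (Fin n)) : PolyRing n :=
  if h : e.Nonempty then fij (e.min' h) (e.max' h) else 1

/-- The generator `g_{A,C,D}`. -/
noncomputable def gPoly (A : Finset (Finset (Fin n))) (C D : Finset (Fin n)) : PolyRing n :=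
  (∏ k ∈ C, X (Sum.inl k)) * (∏ k ∈ D, X (Sum.inr k)) * ∏ e ∈ A2set A, fPair e

/-- The cycle graph on `[n]`. -/
def cycG (n : ℕ) [NeZero n] : SimpleGraph (Fin n) :=
  SimpleGraph.fromRel (fun i j => j = i + 1)

/-- The connected domination number of `G`. -/
noncomputable def gammaC (G : SimpleGraph (Fin n)) : ℕ :=
  sInf {k | ∃ A : Set (Fin n), ConnDom G Set.univ A ∧ A.ncard = k}

/-- `S'` is nice with respect to the components `V1`, `V2`. -/
def Nice (G : SimpleGraph (Fin n)) (V1 V2 S' : Set (Fin n)) : Prop :=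
  ¬ ∃ i j, i ∈ V1 \ S' ∧ j ∈ V2 \ S' ∧ SameComp G S'ᶜ i j

/-- `V1`, `V2` are the vertex sets of the two connected components of the
subgraph induced on `Sᶜ`. -/
def ComponentsOf (G : SimpleGraph (Fin n)) (S V1 V2 : Set (Fin n)) : Prop :=
  V1 ∪ V2 = Sᶜ ∧ Disjoint V1 V2 ∧ V1.Nonempty ∧ V2.Nonempty ∧
    (∀ a ∈ V1, ∀ b ∈ V1, SameComp G Sᶜ a b) ∧
    (∀ a ∈ V2, ∀ b ∈ V2, SameComp G Sᶜ a b) ∧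
    ∀ a ∈ V1, ∀ b ∈ V2, ¬ SameComp G Sᶜ a b

/-- Significance index of a variable: `x_1 > ⋯ > x_n > y_1 > ⋯ > y_n`. -/
def sigIdx (n : ℕ) : Fin n ⊕ Fin n → ℕ := Sum.elim (fun i => (i : ℕ)) (fun i => n + i)

/-- Lexicographic comparison of exponent vectors. -/
def lexLt (n : ℕ) (a b : (Fin n ⊕ Fin n) →₀ ℕ) : Prop :=
  ∃ v, a v < b v ∧ ∀ w, sigIdx n w < sigIdx n v → a w = b w

/-- `m` is the leading (lex-largest) exponent of `f`. -/
def IsLeadExp (n : ℕ) (f : PolyRing n) (m : (Fin n ⊕ Fin n) →₀ ℕ) : Prop :=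
  m ∈ f.support ∧ ∀ m' ∈ f.support, m' ≠ m → lexLt n m' m

/-- The initial ideal of `I` with respect to the lexicographic order. -/
noncomputable def inIdeal (I : Ideal (PolyRing n)) : Ideal (PolyRing n) :=
  Ideal.span {g | ∃ f ∈ I, ∃ m, IsLeadExp n f m ∧ g = monomial m 1}

/-- A permutation `σ` of `[n]` is `S`-consistent (for `S` an independent set of
the cycle `C_n`). -/
def SConsistent (n : ℕ) [NeZero n] (S : Set (Fin n)) (σ : Equiv.Perm (Fin n)) : Prop :=
  (∀ x : Fin n, x ∉ S → x + 1 ∈ S →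
    ((σ x < σ (x + 2) → x + 3 ∉ S → σ (x + 2) < σ (x + 3)) ∧
     (σ x < σ (x + 2) → x - 1 ∉ S → σ (x - 1) < σ x) ∧
     (σ (x + 2) < σ x → x + 3 ∉ S → σ (x + 3) < σ (x + 2)) ∧
     (σ (x + 2) < σ x → x - 1 ∉ S → σ x < σ (x - 1)))) ∧
  (∀ y : Fin n, y - 1 ∉ S → y ∉ S → y + 1 ∉ S → (σ (y - 1) < σ y ↔ σ y < σ (y + 1)))

/-!
The components of a proper subset `T` of the cycle are arcs, one for each `a ∈ T` with
`a - 1 ∉ T`. Hence the nonempty members of `min(C_n)` are the independent sets of size at least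
two, and the complement of such an `S` splits into `|S|` arcs.

For `v ∉ S`, replacing the neighbours of `v` in `S` by `v` gives a cut `S'' ∈ min(C_n)` under
which no two points of `Sᶜ` become connected (the freed neighbours are dead ends), so a
transversal must cover `v`. Removing `x ∈ S` from `S` merges the two arcs around `x` and nothing
else, so some pair of `A` must join them. Conversely, a cut `S' ⊄ S` contains a covered vertex,
and a cut `S' ⊊ S` frees some `x ∈ S`, which connects the pair of `A` attached to `x`.
-/

lemma SameComp.symm {G : SimpleGraph (Fin n)} {T : Set (Fin n)} {a b : Fin n}
    (h : SameComp G T a b) : SameComp G T b a :=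
  let ⟨ha, hb, hr⟩ := h; ⟨hb, ha, hr.symm⟩

lemma SameComp.trans {G : SimpleGraph (Fin n)} {T : Set (Fin n)} {a b c : Fin n}
    (h : SameComp G T a b) (h' : SameComp G T b c) : SameComp G T a c :=
  let ⟨ha, _, hr⟩ := h; let ⟨_, hc, hr'⟩ := h'; ⟨ha, hc, hr.trans hr'⟩

lemma SameComp.mono {G : SimpleGraph (Fin n)} {T T' : Set (Fin n)} {a b : Fin n}
    (h : SameComp G T a b) (hT : T ⊆ T') : SameComp G T' a b :=
  let ⟨ha, hb, hr⟩ := h; ⟨hT ha, hT hb, hr.map (G.induceHomOfLE hT).toHom⟩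

lemma sameComp_of_adj {G : SimpleGraph (Fin n)} {T : Set (Fin n)} {a b : Fin n}
    (ha : a ∈ T) (hb : b ∈ T) (h : G.Adj a b) : SameComp G T a b :=
  ⟨ha, hb, SimpleGraph.Adj.reachable (G := G.induce T) h⟩

lemma Fin.val_sub_add_val_sub [NeZero n] (a b c : Fin n) :
    ((b - a : Fin n) : ℕ) + ((c - b : Fin n) : ℕ) = ((c - a : Fin n) : ℕ) ∨
      ((b - a : Fin n) : ℕ) + ((c - b : Fin n) : ℕ) = ((c - a : Fin n) : ℕ) + n := by
  have h := Fin.val_add_eq_ite (b - a) (c - b)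
  rw [show b - a + (c - b) = c - a by abel] at h
  have := (b - a).isLt
  have := (c - b).isLt
  split_ifs at h <;> omega

lemma Fin.val_sub_eq_zero_iff [NeZero n] {a b : Fin n} :
    ((b - a : Fin n) : ℕ) = 0 ↔ b = a := by
  rw [Fin.val_eq_zero_iff, sub_eq_zero]

lemma Fin.val_sub_left_injective [NeZero n] (a : Fin n) :
    Function.Injective fun p : Fin n => ((p - a : Fin n) : ℕ) :=
  fun _ _ h => sub_left_injective (Fin.val_injective h)

lemma Fin.val_add_one_sub_self [NeZero n] (hn : 2 ≤ n) (a : Fin n) :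
    ((a + 1 - a : Fin n) : ℕ) = 1 := by
  rw [add_sub_cancel_left, Fin.val_one', Nat.mod_eq_of_lt (by omega)]

-- Arcs are measured by the forward distance `((p - a : Fin n) : ℕ)`; the arc facts below all
-- reduce to the cocycle rule `Fin.val_sub_add_val_sub` and `omega`.
def cycArc (a b : Fin n) : Set (Fin n) := {p | ((p - a : Fin n) : ℕ) ≤ ((b - a : Fin n) : ℕ)}

lemma mem_cycArc {a b p : Fin n} :
    p ∈ cycArc a b ↔ ((p - a : Fin n) : ℕ) ≤ ((b - a : Fin n) : ℕ) := Iff.rfl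

lemma right_mem_cycArc (a b : Fin n) : b ∈ cycArc a b := mem_cycArc.2 le_rfl

lemma cycArc_subset_cycArc_left {a b p : Fin n} (hp : p ∈ cycArc a b) :
    cycArc a p ⊆ cycArc a b :=
  fun _ hq => le_trans (mem_cycArc.1 hq) (mem_cycArc.1 hp)

section CycArc

variable [NeZero n] {a b p x : Fin n}

lemma left_mem_cycArc (a b : Fin n) : a ∈ cycArc a b := by
  simp [mem_cycArc]

lemma cycArc_self (a : Fin n) : cycArc a a = {a} := by
  ext p
  rw [mem_cycArc, sub_self, Fin.val_zero, Nat.le_zero, Fin.val_sub_eq_zero_iff,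
    Set.mem_singleton_iff]

lemma cycArc_subset_cycArc_right (hp : p ∈ cycArc a b) : cycArc p b ⊆ cycArc a b := by
  intro q hq
  have := Fin.val_sub_add_val_sub a p b
  have := Fin.val_sub_add_val_sub a p q
  have := (b - p).isLt
  have := (q - a).isLt
  simp only [mem_cycArc] at hp hq ⊢
  omega

lemma sub_one_mem_cycArc (hn : 2 ≤ n) (hx : x ≠ a) : x - 1 ∈ cycArc a x := by
  have := Fin.val_sub_add_val_sub a (x - 1) x
  have := Fin.val_add_one_sub_self hn (x - 1)
  have := (x - 1 - a).isLt
  have := (Fin.val_sub_eq_zero_iff (a := a) (b := x)).not.2 hx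
  rw [sub_add_cancel] at *
  simp only [mem_cycArc]
  omega

lemma add_one_mem_cycArc (hn : 2 ≤ n) (hx : x ≠ b) : x + 1 ∈ cycArc x b := by
  have := Fin.val_add_one_sub_self hn x
  have := (Fin.val_sub_eq_zero_iff (a := x) (b := b)).not.2 hx.symm
  simp only [mem_cycArc]
  omega

lemma notMem_cycArc_sub_one (hn : 2 ≤ n) (hx : x ≠ a) : x ∉ cycArc a (x - 1) := by
  have := Fin.val_sub_add_val_sub a (x - 1) x
  have := Fin.val_add_one_sub_self hn (x - 1)
  have := (x - 1 - a).isLt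
  have := (Fin.val_sub_eq_zero_iff (a := a) (b := x)).not.2 hx
  rw [sub_add_cancel] at *
  simp only [mem_cycArc]
  omega

lemma notMem_cycArc_add_one (hn : 2 ≤ n) (hx : x ≠ b) : x ∉ cycArc (x + 1) b := by
  have := Fin.val_sub_add_val_sub x (x + 1) b
  have := Fin.val_sub_add_val_sub x (x + 1) x
  have := Fin.val_add_one_sub_self hn x
  have := (b - (x + 1)).isLt
  have := (Fin.val_sub_eq_zero_iff (a := x) (b := b)).not.2 hx.symm
  simp only [mem_cycArc, sub_self, Fin.val_zero] at *
  omega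

lemma cycArc_subset_insert_cycArc_add_one (hn : 2 ≤ n) :
    cycArc x b ⊆ insert x (cycArc (x + 1) b) := by
  intro p hp
  rw [Set.mem_insert_iff, or_iff_not_imp_left]
  intro hpx
  have := Fin.val_sub_add_val_sub x (x + 1) p
  have := Fin.val_sub_add_val_sub x (x + 1) b
  have := Fin.val_add_one_sub_self hn x
  have := (p - x).isLt
  have := (p - (x + 1)).isLt
  have := (Fin.val_sub_eq_zero_iff (a := x) (b := p)).not.2 hpx
  simp only [mem_cycArc] at hp ⊢
  omega

lemma cycArc_add_one_subset_insert_cycArc (hn : 2 ≤ n) :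
    cycArc a (x + 1) ⊆ insert (x + 1) (cycArc a x) := by
  intro p hp
  rw [Set.mem_insert_iff, or_iff_not_imp_left]
  intro hpx
  have := Fin.val_sub_add_val_sub a x (x + 1)
  have := Fin.val_add_one_sub_self hn x
  have := (p - a).isLt
  have := (x - a).isLt
  have : ((p - a : Fin n) : ℕ) ≠ ((x + 1 - a : Fin n) : ℕ) :=
    fun h => hpx (Fin.val_sub_left_injective a h)
  simp only [mem_cycArc] at hp ⊢
  omega

lemma sub_one_add_one_mem_cycArc (hn : 2 ≤ n) (hx : x ≠ a) (hx' : x ≠ b) (hp : x ∈ cycArc a b) :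
    x - 1 ∈ cycArc a b ∧ x + 1 ∈ cycArc a b :=
  ⟨cycArc_subset_cycArc_left hp (sub_one_mem_cycArc hn hx),
    cycArc_subset_cycArc_right hp (add_one_mem_cycArc hn hx')⟩

lemma mem_cycArc_add_one_sub_one (hn : 2 ≤ n) (hp : p ≠ x) : p ∈ cycArc (x + 1) (x - 1) := by
  have := Fin.val_sub_add_val_sub x (x + 1) p
  have := Fin.val_sub_add_val_sub x (x + 1) x
  have := Fin.val_sub_add_val_sub (x + 1) (x - 1) x
  have := Fin.val_add_one_sub_self hn x
  have := Fin.val_add_one_sub_self hn (x - 1)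
  have := (p - x).isLt
  have := (x - 1 - (x + 1)).isLt
  have := (Fin.val_sub_eq_zero_iff (a := x) (b := p)).not.2 hp
  rw [sub_add_cancel] at *
  simp only [mem_cycArc, sub_self, Fin.val_zero] at *
  omega

end CycArc

section CycleComponents

variable [NeZero n] {T : Set (Fin n)} {a b x y : Fin n}

lemma cycG_adj_iff : (cycG n).Adj x y ↔ x ≠ y ∧ (y = x + 1 ∨ x = y + 1) :=
  SimpleGraph.fromRel_adj _ x y

lemma cycG_adj_add_one (hn : 2 ≤ n) (x : Fin n) : (cycG n).Adj x (x + 1) := by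
  refine cycG_adj_iff.2 ⟨fun h => ?_, Or.inl rfl⟩
  have := Fin.val_add_one_sub_self hn x
  rw [← h, sub_self, Fin.val_zero] at this
  exact zero_ne_one this

lemma sameComp_of_cycArc_subset (hn : 2 ≤ n) (h : cycArc a b ⊆ T) :
    SameComp (cycG n) T a b := by
  induction hk : ((b - a : Fin n) : ℕ) using Nat.strong_induction_on generalizing b with
  | _ k ih =>
    by_cases hba : b = a
    · subst hba
      exact ⟨h (left_mem_cycArc b b), h (left_mem_cycArc b b), .refl _⟩
    have hb1 := sub_one_mem_cycArc hn hba
    have hlt : ((b - 1 - a : Fin n) : ℕ) < k := by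
      have := notMem_cycArc_sub_one hn hba
      rw [mem_cycArc] at hb1 this
      omega
    have hstep : SameComp (cycG n) T (b - 1) b := by
      have := cycG_adj_add_one hn (b - 1)
      rw [sub_add_cancel] at this
      exact sameComp_of_adj (h hb1) (h (right_mem_cycArc a b)) this
    exact (ih _ hlt ((cycArc_subset_cycArc_left hb1).trans h) rfl).trans hstep

lemma cycArc_subset_or_of_adj (hn : 2 ≤ n) (hx : x ∈ T) (hxy : (cycG n).Adj x y)
    (h : cycArc y b ⊆ T ∨ cycArc b y ⊆ T) : cycArc x b ⊆ T ∨ cycArc b x ⊆ T := by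
  rcases (cycG_adj_iff.1 hxy).2 with rfl | rfl
  · rcases h with h | h
    · exact .inl ((cycArc_subset_insert_cycArc_add_one hn).trans (Set.insert_subset hx h))
    by_cases hxb : x + 1 = b
    · subst hxb
      exact .inl ((cycArc_subset_insert_cycArc_add_one hn).trans (Set.insert_subset hx h))
    have := sub_one_mem_cycArc hn hxb
    rw [add_sub_cancel_right] at this
    exact .inr ((cycArc_subset_cycArc_left this).trans h)
  · rcases h with h | h
    · by_cases hyb : y = b
      · subst hyb
        exact .inr ((cycArc_add_one_subset_insert_cycArc hn).trans (Set.insert_subset hx h))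
      exact .inl ((cycArc_subset_cycArc_right (add_one_mem_cycArc hn hyb)).trans h)
    · exact .inr ((cycArc_add_one_subset_insert_cycArc hn).trans (Set.insert_subset hx h))

lemma sameComp_cycG_iff (hn : 2 ≤ n) :
    SameComp (cycG n) T a b ↔ cycArc a b ⊆ T ∨ cycArc b a ⊆ T := by
  refine ⟨fun ⟨ha, hb, ⟨w⟩⟩ => ?_, fun h => h.elim (sameComp_of_cycArc_subset hn)
    fun h => (sameComp_of_cycArc_subset hn h).symm⟩
  suffices ∀ u v : T, ((cycG n).induce T).Walk u v → cycArc u v ⊆ T ∨ cycArc v u ⊆ T from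
    this _ _ w
  intro u v w
  induction w with
  | nil => exact .inl (by rw [cycArc_self]; exact Set.singleton_subset_iff.2 (Subtype.mem _))
  | cons hxy _ ih => exact cycArc_subset_or_of_adj hn (Subtype.mem _) hxy ih

end CycleComponents

def arcStarts [NeZero n] (T : Set (Fin n)) : Set (Fin n) := {a | a ∈ T ∧ a - 1 ∉ T}

def IsCycleIndep [NeZero n] (S : Set (Fin n)) : Prop := ∀ s ∈ S, s + 1 ∉ S

section CountComponents

variable [NeZero n] {S T : Set (Fin n)}

lemma exists_mem_arcStarts_cycArc_subset (hn : 2 ≤ n) {z b : Fin n} (hz : z ∉ T) (hb : b ∈ T) :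
    ∃ a ∈ arcStarts T, cycArc a b ⊆ T := by
  induction hk : ((b - z : Fin n) : ℕ) generalizing b with
  | zero => exact absurd (Fin.val_sub_eq_zero_iff.1 hk ▸ hb) hz
  | succ k ih =>
    by_cases hb1 : b - 1 ∈ T
    · have := Fin.val_sub_add_val_sub z (b - 1) b
      have := Fin.val_add_one_sub_self hn (b - 1)
      have := (b - 1 - z).isLt
      rw [sub_add_cancel] at *
      obtain ⟨a, ha, hab⟩ := ih hb1 (by omega)
      have := cycArc_add_one_subset_insert_cycArc (a := a) hn (x := b - 1)
      rw [sub_add_cancel] at this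
      exact ⟨a, ha, this.trans (Set.insert_subset hb hab)⟩
    · exact ⟨b, ⟨hb, hb1⟩, by rw [cycArc_self]; exact Set.singleton_subset_iff.2 hb⟩

lemma numComp_cycG_eq_ncard_arcStarts (hn : 2 ≤ n) (hT : T ≠ Set.univ) :
    numComp (cycG n) T = (arcStarts T).ncard := by
  obtain ⟨z, hz⟩ := (Set.ne_univ_iff_exists_notMem T).1 hT
  rw [← Nat.card_coe_set_eq]
  refine (Nat.card_eq_of_bijective
    (fun a : arcStarts T => ((cycG n).induce T).connectedComponentMk ⟨a, a.2.1⟩) ⟨?_, ?_⟩).symm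
  · rintro ⟨a, ha, ha1⟩ ⟨b, hb, hb1⟩ hab
    have hab : SameComp (cycG n) T a b := ⟨ha, hb, SimpleGraph.ConnectedComponent.eq.1 hab⟩
    by_contra hne
    rcases (sameComp_cycG_iff hn).1 hab with h | h
    · exact hb1 (h (sub_one_mem_cycArc hn fun h => hne (Subtype.ext h.symm)))
    · exact ha1 (h (sub_one_mem_cycArc hn fun h => hne (Subtype.ext h)))
  · refine SimpleGraph.ConnectedComponent.ind fun ⟨b, hb⟩ => ?_
    obtain ⟨a, ha, hab⟩ := exists_mem_arcStarts_cycArc_subset hn hz hb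
    exact ⟨⟨a, ha⟩, SimpleGraph.ConnectedComponent.eq.2 (sameComp_of_cycArc_subset hn hab).2.2⟩

lemma arcStarts_compl (hS : IsCycleIndep S) : arcStarts Sᶜ = (· + 1) '' S := by
  ext a
  refine ⟨fun ⟨_, ha1⟩ => ⟨a - 1, not_not.1 ha1, sub_add_cancel a 1⟩, ?_⟩
  rintro ⟨s, hs, rfl⟩
  exact ⟨hS s hs, by rwa [add_sub_cancel_right, Set.notMem_compl_iff]⟩

lemma numComp_cycG_compl (hn : 2 ≤ n) (hS : IsCycleIndep S) (hne : S.Nonempty) :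
    numComp (cycG n) Sᶜ = S.ncard := by
  rw [numComp_cycG_eq_ncard_arcStarts hn (Set.compl_ne_univ.2 hne), arcStarts_compl hS,
    Set.ncard_image_of_injective _ (add_left_injective 1)]

lemma IsCycleIndep.mono {S' : Set (Fin n)} (hS : IsCycleIndep S) (h : S' ⊆ S) :
    IsCycleIndep S' :=
  fun s hs hs1 => hS s (h hs) (h hs1)

lemma IsCycleIndep.sub_one_notMem (hS : IsCycleIndep S) {x : Fin n} (hx : x ∈ S) : x - 1 ∉ S :=
  fun h => hS _ h (by rwa [sub_add_cancel])

lemma IsCycleIndep.insert_sdiff (hn : 2 ≤ n) (hS : IsCycleIndep S) (v : Fin n) :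
    IsCycleIndep (insert v (S \ {v - 1, v + 1})) := by
  rintro s (rfl | ⟨hs, hsv⟩) hs1
  · rcases hs1 with h | ⟨_, h⟩
    · exact (cycG_adj_add_one hn s).ne h.symm
    · exact h (.inr rfl)
  · rcases hs1 with h | ⟨hs1, _⟩
    · exact hsv (.inl (eq_sub_of_add_eq h))
    · exact hS s hs hs1

lemma mem_minSet_cycG (hn : 2 ≤ n) (hS : IsCycleIndep S) (h2 : 2 ≤ S.ncard) :
    S ∈ minSet (cycG n) := by
  have hne : S.Nonempty := Set.nonempty_of_ncard_ne_zero (by omega)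
  refine .inr ⟨S.ncard, h2, hne, ?_, numComp_cycG_compl hn hS hne, fun i hi => ?_⟩
  · obtain ⟨s, hs⟩ := hne
    exact Set.ne_univ_iff_exists_notMem S |>.2 ⟨s + 1, hS s hs⟩
  · have hcard := Set.ncard_sdiff_singleton_of_mem hi
    rw [Set.union_comm, ← Set.compl_sdiff, numComp_cycG_compl hn (hS.mono Set.sdiff_subset)
      (Set.nonempty_of_ncard_ne_zero (by omega)), numComp_cycG_compl hn hS hne]
    omega

lemma IsCycleIndep.of_mem_minSet (hn : 2 ≤ n) (hS : S ∈ minSet (cycG n)) : IsCycleIndep S := by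
  rcases hS with rfl | ⟨_, _, _, _, _, hmin⟩
  · exact fun _ h => h.elim
  intro s hs hs1
  have hss1 : s + 1 ≠ s := (cycG_adj_add_one hn s).ne.symm
  have hlt := hmin s hs
  rw [numComp_cycG_eq_ncard_arcStarts hn (Set.compl_ne_univ.2 ⟨s, hs⟩),
    numComp_cycG_eq_ncard_arcStarts hn
      ((Set.ne_univ_iff_exists_notMem _).2 ⟨s + 1, by simp [hs1, hss1]⟩)] at hlt
  refine hlt.not_ge (Set.ncard_le_ncard ?_)
  rintro a ⟨ha, ha1⟩
  refine ⟨.inl ha, ?_⟩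
  rintro (h | h)
  · exact ha1 h
  · exact ha (by rw [← sub_add_cancel a 1, h]; exact hs1)

end CountComponents

lemma exists_of_depM_of_not_depM {G : SimpleGraph (Fin n)} {S S' B : Set (Fin n)}
    (hnd : ¬ depM G S B) (hd : depM G S' B) :
    (∃ v ∈ B, v ∈ S' ∧ v ∉ S) ∨
      ∃ a ∈ B, ∃ b ∈ B, a ≠ b ∧ a ∉ S ∧ b ∉ S ∧ SameComp G S'ᶜ a b ∧ ¬ SameComp G Sᶜ a b := by
  simp only [depM, not_or, Set.not_nonempty_iff_eq_empty, not_exists, not_and] at hnd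
  obtain ⟨hS, hcomp, hcard⟩ := hnd
  have hout : ∀ v ∈ B, v ∉ S := fun v hv hvS => (Set.eq_empty_iff_forall_notMem.1 hS) v ⟨hv, hvS⟩
  rcases hd with ⟨v, hv, hvS'⟩ | ⟨a, b, ha, hb, hab, h⟩ | h3
  · exact .inl ⟨v, hv, hvS', hout v hv⟩
  · exact .inr ⟨a, ha, b, hb, hab, hout a ha, hout b hb, h, hcomp a b ha hb hab⟩
  · omega

lemma eq_pair_of_not_depM {G : SimpleGraph (Fin n)} {S : Set (Fin n)} {e : Finset (Fin n)}
    {a b : Fin n} (hnd : ¬ depM G S e) (ha : a ∈ e) (hb : b ∈ e) (hab : a ≠ b) : e = {a, b} := by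
  have hcard : e.card ≤ 2 := by
    by_contra h
    exact hnd (.inr (.inr (by rw [Set.ncard_coe_finset]; omega)))
  refine (Finset.eq_of_subset_of_card_le ?_ (by rw [Finset.card_pair hab]; exact hcard)).symm
  exact Finset.insert_subset ha (Finset.singleton_subset_iff.2 hb)

section Transversal

variable [NeZero n] {S T : Set (Fin n)} {A : Finset (Finset (Fin n))} {a b v x : Fin n}

lemma cycArc_subset_of_deadEnds (hn : 2 ≤ n) {T' : Set (Fin n)}
    (hdead : ∀ p ∈ T', p ∉ T → p - 1 ∉ T' ∨ p + 1 ∉ T') (ha : a ∈ T) (hb : b ∈ T)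
    (h : cycArc a b ⊆ T') : cycArc a b ⊆ T := by
  intro p hp
  by_contra hpT
  have ⟨h1, h2⟩ := sub_one_add_one_mem_cycArc hn (by rintro rfl; exact hpT ha)
    (by rintro rfl; exact hpT hb) hp
  exact (hdead p (h hp) hpT).elim (· (h h1)) (· (h h2))

lemma sameComp_compl_of_sameComp_compl_insert_sdiff (hn : 2 ≤ n) (ha : a ∉ S) (hb : b ∉ S)
    (h : SameComp (cycG n) (insert v (S \ {v - 1, v + 1}))ᶜ a b) : SameComp (cycG n) Sᶜ a b := by
  have hdead : ∀ p ∈ (insert v (S \ {v - 1, v + 1}))ᶜ, p ∉ Sᶜ →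
      p - 1 ∉ (insert v (S \ {v - 1, v + 1}))ᶜ ∨ p + 1 ∉ (insert v (S \ {v - 1, v + 1}))ᶜ := by
    intro p hp hpS
    rw [Set.notMem_compl_iff] at hpS
    rcases not_not.1 fun h' => hp (.inr ⟨hpS, h'⟩) with rfl | rfl
    · exact .inr (by simp)
    · exact .inl (by simp)
  rw [sameComp_cycG_iff hn] at h ⊢
  exact h.imp (cycArc_subset_of_deadEnds hn hdead ha hb) (cycArc_subset_of_deadEnds hn hdead hb ha)

lemma cycArc_subset_of_subset_insert (hn : 2 ≤ n) (hx : x ∉ T) (ha : a ∈ T) (hb : b ∈ T)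
    (h : cycArc a b ⊆ insert x T) (hab : ¬ cycArc a b ⊆ T) :
    cycArc a (x - 1) ⊆ T ∧ cycArc (x + 1) b ⊆ T := by
  have hxa : x ≠ a := by rintro rfl; exact hx ha
  have hxb : x ≠ b := by rintro rfl; exact hx hb
  have hxab : x ∈ cycArc a b := by
    by_contra hxab
    exact hab fun p hp => (h hp).resolve_left (by rintro rfl; exact hxab hp)
  refine ⟨fun p hp => (h ?_).resolve_left ?_, fun p hp => (h ?_).resolve_left ?_⟩
  · exact cycArc_subset_cycArc_left hxab (cycArc_subset_cycArc_left
      (sub_one_mem_cycArc hn hxa) hp)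
  · rintro rfl; exact notMem_cycArc_sub_one hn hxa hp
  · exact cycArc_subset_cycArc_right hxab (cycArc_subset_cycArc_right
      (add_one_mem_cycArc hn hxb) hp)
  · rintro rfl; exact notMem_cycArc_add_one hn hxb hp

lemma sameComp_sub_one_add_one_of_sameComp_insert (hn : 2 ≤ n) (hx : x ∉ T) (ha : a ∈ T)
    (hb : b ∈ T) (h : SameComp (cycG n) (insert x T) a b) (hab : ¬ SameComp (cycG n) T a b) :
    (SameComp (cycG n) T a (x - 1) ∧ SameComp (cycG n) T b (x + 1)) ∨
      (SameComp (cycG n) T b (x - 1) ∧ SameComp (cycG n) T a (x + 1)) := by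
  rw [sameComp_cycG_iff hn, not_or] at hab
  rcases (sameComp_cycG_iff hn).1 h with h | h
  · obtain ⟨h1, h2⟩ := cycArc_subset_of_subset_insert hn hx ha hb h hab.1
    exact .inl ⟨sameComp_of_cycArc_subset hn h1, (sameComp_of_cycArc_subset hn h2).symm⟩
  · obtain ⟨h1, h2⟩ := cycArc_subset_of_subset_insert hn hx hb ha h hab.2
    exact .inr ⟨sameComp_of_cycArc_subset hn h1, (sameComp_of_cycArc_subset hn h2).symm⟩

lemma not_sameComp_compl_sub_one_add_one (hn : 3 ≤ n) {t : Fin n} (hx : x ∈ S) (ht : t ∈ S)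
    (htx : t ≠ x) : ¬ SameComp (cycG n) Sᶜ (x - 1) (x + 1) := by
  have hne : x - 1 ≠ x + 1 := by
    intro h
    have := Fin.val_sub_add_val_sub (x - 1) x (x + 1)
    have := Fin.val_add_one_sub_self (by omega) (x - 1)
    have := Fin.val_add_one_sub_self (by omega) x
    rw [sub_add_cancel, h, sub_self, Fin.val_zero] at *
    omega
  rw [sameComp_cycG_iff (by omega)]
  rintro (h | h)
  · have := add_one_mem_cycArc (by omega) hne
    rw [sub_add_cancel] at this
    exact h this hx
  · exact h (mem_cycArc_add_one_sub_one (by omega) htx) ht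

lemma iUnion_eq_compl_of_transversal (hn : 2 ≤ n) (hS : IsCycleIndep S) (hcard : 3 ≤ S.ncard)
    (hout : ∀ e ∈ A, ¬ depM (cycG n) S ↑e)
    (hT : ∀ S' ∈ minSet (cycG n), S' ≠ S → ∃ e ∈ A, depM (cycG n) S' ↑e) :
    (⋃ e ∈ A, (e : Set (Fin n))) = Sᶜ := by
  refine (Set.iUnion₂_subset fun e he v hv hvS => hout e he (.inl ⟨v, hv, hvS⟩)).antisymm
    fun v hv => ?_
  have hcard' : 2 ≤ (insert v (S \ {v - 1, v + 1})).ncard := by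
    rw [Set.ncard_insert_of_notMem fun h => hv h.1]
    have := Set.le_ncard_sdiff {v - 1, v + 1} S
    have := Set.ncard_insert_le (v - 1) {v + 1}
    rw [Set.ncard_singleton] at this
    omega
  obtain ⟨e, he, hd⟩ := hT _ (mem_minSet_cycG hn (hS.insert_sdiff hn v) hcard')
    fun h => hv (h ▸ Set.mem_insert v _)
  rcases exists_of_depM_of_not_depM (hout e he) hd with
    ⟨w, hw, hwv, hwS⟩ | ⟨a, -, b, -, -, ha, hb, hab, hnab⟩
  · obtain rfl : w = v := hwv.resolve_right fun h => hwS h.1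
    exact Set.mem_biUnion he hw
  · exact absurd (sameComp_compl_of_sameComp_compl_insert_sdiff hn ha hb hab) hnab

lemma exists_pair_of_transversal (hn : 2 ≤ n) (hS : IsCycleIndep S) (hcard : 3 ≤ S.ncard)
    (hout : ∀ e ∈ A, ¬ depM (cycG n) S ↑e)
    (hT : ∀ S' ∈ minSet (cycG n), S' ≠ S → ∃ e ∈ A, depM (cycG n) S' ↑e) {x : Fin n}
    (hx : x ∈ S) : ∃ u w : Fin n, SameComp (cycG n) Sᶜ u (x - 1) ∧
      SameComp (cycG n) Sᶜ w (x + 1) ∧ ({u, w} : Finset (Fin n)) ∈ A := by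
  have hcard' := Set.ncard_sdiff_singleton_of_mem hx
  obtain ⟨e, he, hd⟩ := hT (S \ {x}) (mem_minSet_cycG hn (hS.mono Set.sdiff_subset) (by omega))
    fun h => (h.symm ▸ hx : x ∈ S \ {x}).2 rfl
  rcases exists_of_depM_of_not_depM (hout e he) hd with
    ⟨v, -, hv, hvS⟩ | ⟨a, hae, b, hbe, hab, ha, hb, h, hnab⟩
  · exact absurd hv.1 hvS
  rw [Set.compl_sdiff, Set.singleton_union] at h
  rw [eq_pair_of_not_depM (hout e he) hae hbe hab] at he
  rcases sameComp_sub_one_add_one_of_sameComp_insert hn (Set.notMem_compl_iff.2 hx) ha hb h hnab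
    with ⟨ha1, hb1⟩ | ⟨hb1, ha1⟩
  · exact ⟨a, b, ha1, hb1, he⟩
  · exact ⟨b, a, hb1, ha1, Finset.pair_comm a b ▸ he⟩

lemma exists_depM_of_iUnion_eq_compl (hn : 3 ≤ n) (hS : IsCycleIndep S) (hcard : 2 ≤ S.ncard)
    (hU : (⋃ e ∈ A, (e : Set (Fin n))) = Sᶜ)
    (hP : ∀ x ∈ S, ∃ u w : Fin n, SameComp (cycG n) Sᶜ u (x - 1) ∧
      SameComp (cycG n) Sᶜ w (x + 1) ∧ ({u, w} : Finset (Fin n)) ∈ A)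
    {S' : Set (Fin n)} (hS' : S' ≠ S) : ∃ e ∈ A, depM (cycG n) S' ↑e := by
  by_cases hsub : S' ⊆ S
  · obtain ⟨x, hx, hxS'⟩ := Set.not_subset.1 fun h => hS' (hsub.antisymm h)
    obtain ⟨u, w, hu, hw, hA⟩ := hP x hx
    obtain ⟨t, ht, htx⟩ := Set.exists_ne_of_one_lt_ncard (show 1 < S.ncard by omega) x
    have hcompl : Sᶜ ⊆ S'ᶜ := Set.compl_subset_compl.2 hsub
    have hadj := cycG_adj_add_one (by omega) (x - 1)
    rw [sub_add_cancel] at hadj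
    have hbridge : SameComp (cycG n) S'ᶜ (x - 1) (x + 1) :=
      (sameComp_of_adj (hcompl (hS.sub_one_notMem hx)) hxS' hadj).trans
        (sameComp_of_adj hxS' (hcompl (hS x hx)) (cycG_adj_add_one (by omega) x))
    have huw : u ≠ w := by
      rintro rfl
      exact not_sameComp_compl_sub_one_add_one hn hx ht htx (hu.symm.trans hw)
    exact ⟨{u, w}, hA, .inr (.inl ⟨u, w, by simp, by simp, huw,
      ((hu.mono hcompl).trans hbridge).trans (hw.mono hcompl).symm⟩)⟩
  · obtain ⟨v, hvS', hvS⟩ := Set.not_subset.1 hsub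
    obtain ⟨e, he, hve⟩ := Set.mem_iUnion₂.1 (hU ▸ hvS : v ∈ ⋃ e ∈ A, (e : Set (Fin n)))
    exact ⟨e, he, .inl ⟨v, hve, hvS'⟩⟩

end Transversal

theorem stmt5_general {n : ℕ} [NeZero n] (hn : 3 ≤ n) (S : Set (Fin n))
    (hS : S ∈ minSet (cycG n)) (hcard : 3 ≤ S.ncard)
    (A : Finset (Finset (Fin n)))
    (hout : ∀ e ∈ A, ¬ depM (cycG n) S ↑e) :
    (∀ S' ∈ minSet (cycG n), S' ≠ S → ∃ e ∈ A, depM (cycG n) S' ↑e) ↔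
      ((⋃ e ∈ A, (e : Set (Fin n))) = Sᶜ ∧
        ∀ x ∈ S, ∃ u w : Fin n, SameComp (cycG n) Sᶜ u (x - 1) ∧
          SameComp (cycG n) Sᶜ w (x + 1) ∧ ({u, w} : Finset (Fin n)) ∈ A) := by
  have hS := IsCycleIndep.of_mem_minSet (by omega) hS
  exact ⟨fun hT => ⟨iUnion_eq_compl_of_transversal (by omega) hS hcard hout hT,
      fun _ hx => exists_pair_of_transversal (by omega) hS hcard hout hT hx⟩,
    fun ⟨hU, hP⟩ _ _ hS' => exists_depM_of_iUnion_eq_compl hn hS (by omega) hU hP hS'⟩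

/-- characterization of transversals for the cycle graph. -/
theorem stmt5 {n : ℕ} [NeZero n] (hn : 3 ≤ n) (S : Set (Fin n))
    (hS : S ∈ minSet (cycG n)) (hcard : 3 ≤ S.ncard)
    (A : Finset (Finset (Fin n)))
    (hsize : ∀ e ∈ A, e.card = 1 ∨ e.card = 2)
    (hout : ∀ e ∈ A, ¬ depM (cycG n) S ↑e) :
    (∀ S' ∈ minSet (cycG n), S' ≠ S → ∃ e ∈ A, depM (cycG n) S' ↑e) ↔
      ((⋃ e ∈ A, (e : Set (Fin n))) = Sᶜ ∧
        ∀ x ∈ S, ∃ u w : Fin n, SameComp (cycG n) Sᶜ u (x - 1) ∧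
          SameComp (cycG n) Sᶜ w (x + 1) ∧ ({u, w} : Finset (Fin n)) ∈ A) :=
  stmt5_general hn S hS hcard A hout
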